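/- arXiv:1811.00475 — 8 statements merged into one kernel-verified Lean document; each statement's English description precedes it below -/
import Mathlib

section
/- For positive reals x_1,...,x_n in (0,1/2] and weights μ_1,...,μ_n ≥ 0 with Σμ_i = 1, let A_n = Σμ_i x_i, G_n = Π x_i^{μ_i}, and A'_n, G'_n the corresponding means of x'_i = 1 - x_i. Then A'_n - G'_n ≤ A_n - G_n. -/
/-!
Put `ψ_c(s) = c log s - s + (s - c)²`, so that `ψ_c'(s) = (s - c)(2s - 1)/s`. On `(0, 1/2]` the
function `ψ_c` is maximal at `c`, on `[1/2, ∞)` it is minimal at `c`. Averaging `ψ_G(x_i) ≤ ψ_G(G)`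
gives `Σ μ_i (x_i - G)² ≤ A - G`, and averaging `ψ_{A'}(x'_i) ≥ ψ_{A'}(A')` gives
`A' - G' ≤ A' log (A'/G') ≤ Σ μ_i (x'_i - A')²`. Since `x'_i - A' = A - x_i`, the two are linked by
`Σ μ_i (x_i - A)² ≤ Σ μ_i (x_i - G)²`.
-/

open Real Set Finset

section SignChange

variable {D : Set ℝ} {f f' : ℝ → ℝ} {c : ℝ}

lemma isMinOn_of_sub_mul_deriv_nonneg (hD : D.OrdConnected)
    (hf : ∀ s ∈ D, HasDerivAt f (f' s) s) (hsign : ∀ s ∈ D, 0 ≤ (s - c) * f' s) (hc : c ∈ D) :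
    IsMinOn f D c := by
  intro t ht
  have hderiv : ∀ a b, a ∈ D → b ∈ D → ∀ s ∈ interior (Icc a b),
      HasDerivWithinAt f (f' s) (interior (Icc a b)) s := fun a b ha hb s hs =>
    (hf s (hD.out ha hb (interior_subset hs))).hasDerivWithinAt
  have hcont : ∀ a b, a ∈ D → b ∈ D → ContinuousOn f (Icc a b) := fun a b ha hb s hs =>
    (hf s (hD.out ha hb hs)).continuousAt.continuousWithinAt
  rcases le_total t c with htc | hct
  · refine antitoneOn_of_hasDerivWithinAt_nonpos (convex_Icc t c) (hcont t c ht hc)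
      (hderiv t c ht hc) (fun s hs => ?_) ⟨le_rfl, htc⟩ ⟨htc, le_rfl⟩ htc
    rw [interior_Icc] at hs
    exact nonpos_of_mul_nonneg_right (hsign s (hD.out ht hc (Ioo_subset_Icc_self hs)))
      (sub_neg.2 hs.2)
  · refine monotoneOn_of_hasDerivWithinAt_nonneg (convex_Icc c t) (hcont c t hc ht)
      (hderiv c t hc ht) (fun s hs => ?_) ⟨le_rfl, hct⟩ ⟨hct, le_rfl⟩ hct
    rw [interior_Icc] at hs
    exact nonneg_of_mul_nonneg_right (hsign s (hD.out hc ht (Ioo_subset_Icc_self hs)))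
      (sub_pos.2 hs.1)

lemma isMaxOn_of_sub_mul_deriv_nonpos (hD : D.OrdConnected)
    (hf : ∀ s ∈ D, HasDerivAt f (f' s) s) (hsign : ∀ s ∈ D, (s - c) * f' s ≤ 0) (hc : c ∈ D) :
    IsMaxOn f D c := by
  have hneg : IsMinOn (fun s => -f s) D c :=
    isMinOn_of_sub_mul_deriv_nonneg hD (fun s hs => (hf s hs).neg)
      (fun s hs => by simpa only [mul_neg, neg_nonneg] using hsign s hs) hc
  simpa only [neg_neg] using hneg.neg

end SignChange

lemma hasDerivAt_mul_log_sub_add_sq (c : ℝ) {s : ℝ} (hs : 0 < s) :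
    HasDerivAt (fun s => c * log s - s + (s - c) ^ 2) ((s - c) * (2 * s - 1) / s) s := by
  have h := (((hasDerivAt_log hs.ne').const_mul c).sub (hasDerivAt_id' s)).add
    (((hasDerivAt_id' s).sub_const c).pow 2)
  refine h.congr_deriv ?_
  field_simp
  ring

lemma isMaxOn_mul_log_sub_add_sq {c : ℝ} (hc : c ∈ Set.Ioc 0 (1 / 2)) :
    IsMaxOn (fun s => c * log s - s + (s - c) ^ 2) (Set.Ioc 0 (1 / 2)) c :=
  isMaxOn_of_sub_mul_deriv_nonpos ordConnected_Ioc
    (fun s hs => hasDerivAt_mul_log_sub_add_sq c hs.1)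
    (fun s hs => by
      rw [← mul_div_assoc, ← mul_assoc, ← sq]
      exact div_nonpos_of_nonpos_of_nonneg
        (mul_nonpos_of_nonneg_of_nonpos (sq_nonneg _) (by linarith [hs.2])) hs.1.le)
    hc

lemma isMinOn_mul_log_sub_add_sq {c : ℝ} (hc : 1 / 2 ≤ c) :
    IsMinOn (fun s => c * log s - s + (s - c) ^ 2) (Ici (1 / 2)) c :=
  isMinOn_of_sub_mul_deriv_nonneg ordConnected_Ici
    (fun s hs => hasDerivAt_mul_log_sub_add_sq c (one_half_pos.trans_le hs))
    (fun s hs => by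
      rw [← mul_div_assoc, ← mul_assoc, ← sq]
      have hs : (1 : ℝ) / 2 ≤ s := hs
      exact div_nonneg (mul_nonneg (sq_nonneg _) (by linarith)) (one_half_pos.trans_le hs).le)
    hc

section WeightedMeans

variable {ι : Type*} (s : Finset ι) {μ x : ι → ℝ}

lemma log_prod_rpow (hx : ∀ i ∈ s, 0 < x i) :
    log (∏ i ∈ s, x i ^ μ i) = ∑ i ∈ s, μ i * log (x i) := by
  rw [log_prod fun i hi => (rpow_pos_of_pos (hx i hi) _).ne']
  exact sum_congr rfl fun i hi => log_rpow (hx i hi) _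

lemma sum_mul_mul_log_sub_add_sq (c : ℝ) (hx : ∀ i ∈ s, 0 < x i) :
    ∑ i ∈ s, μ i * (c * log (x i) - x i + (x i - c) ^ 2) =
      c * log (∏ i ∈ s, x i ^ μ i) - ∑ i ∈ s, μ i * x i + ∑ i ∈ s, μ i * (x i - c) ^ 2 := by
  rw [log_prod_rpow s hx, mul_sum, ← sum_sub_distrib, ← sum_add_distrib]
  exact sum_congr rfl fun i _ => by ring

lemma sum_mul_sq_sub_eq (hsum : ∑ i ∈ s, μ i = 1) (c : ℝ) :
    ∑ i ∈ s, μ i * (x i - c) ^ 2 =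
      ∑ i ∈ s, μ i * (x i - ∑ j ∈ s, μ j * x j) ^ 2 + (∑ j ∈ s, μ j * x j - c) ^ 2 := by
  set A := ∑ j ∈ s, μ j * x j
  have hexpand : ∀ a, ∑ i ∈ s, μ i * (x i - a) ^ 2 =
      ∑ i ∈ s, μ i * x i ^ 2 - 2 * a * A + a ^ 2 := fun a =>
    calc ∑ i ∈ s, μ i * (x i - a) ^ 2
        = ∑ i ∈ s, (μ i * x i ^ 2 - 2 * a * (μ i * x i) + a ^ 2 * μ i) :=
          sum_congr rfl fun i _ => by ring
      _ = _ := by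
          rw [sum_add_distrib, sum_sub_distrib, ← mul_sum, ← mul_sum, hsum, mul_one]
  rw [hexpand, hexpand]
  ring

variable {s}

lemma sum_mul_le_of_forall_le (hμ : ∀ i ∈ s, 0 ≤ μ i) (hsum : ∑ i ∈ s, μ i = 1) {b : ℝ}
    (hx : ∀ i ∈ s, x i ≤ b) : ∑ i ∈ s, μ i * x i ≤ b :=
  calc ∑ i ∈ s, μ i * x i ≤ ∑ i ∈ s, μ i * b :=
        sum_le_sum fun i hi => mul_le_mul_of_nonneg_left (hx i hi) (hμ i hi)
    _ = b := by rw [← sum_mul, hsum, one_mul]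

lemma le_sum_mul_of_forall_le (hμ : ∀ i ∈ s, 0 ≤ μ i) (hsum : ∑ i ∈ s, μ i = 1) {b : ℝ}
    (hx : ∀ i ∈ s, b ≤ x i) : b ≤ ∑ i ∈ s, μ i * x i :=
  calc b = ∑ i ∈ s, μ i * b := by rw [← sum_mul, hsum, one_mul]
    _ ≤ ∑ i ∈ s, μ i * x i :=
        sum_le_sum fun i hi => mul_le_mul_of_nonneg_left (hx i hi) (hμ i hi)

lemma sum_mul_sq_sub_geomMean_le (hμ : ∀ i ∈ s, 0 ≤ μ i) (hsum : ∑ i ∈ s, μ i = 1)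
    (hx : ∀ i ∈ s, x i ∈ Set.Ioc 0 (1 / 2)) :
    ∑ i ∈ s, μ i * (x i - ∏ j ∈ s, x j ^ μ j) ^ 2 ≤
      ∑ i ∈ s, μ i * x i - ∏ i ∈ s, x i ^ μ i := by
  set G := ∏ j ∈ s, x j ^ μ j
  have hx0 : ∀ i ∈ s, 0 < x i := fun i hi => (hx i hi).1
  have hG : G ∈ Set.Ioc 0 (1 / 2) :=
    ⟨prod_pos fun i hi => rpow_pos_of_pos (hx0 i hi) _,
      (geom_mean_le_arith_mean_weighted s μ x hμ hsum fun i hi => (hx0 i hi).le).trans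
        (sum_mul_le_of_forall_le hμ hsum fun i hi => (hx i hi).2)⟩
  have hpointwise := isMaxOn_mul_log_sub_add_sq hG
  have havg : ∑ i ∈ s, μ i * (G * log (x i) - x i + (x i - G) ^ 2) ≤ G * log G - G :=
    calc _ ≤ ∑ i ∈ s, μ i * (G * log G - G + (G - G) ^ 2) :=
          sum_le_sum fun i hi => mul_le_mul_of_nonneg_left (hpointwise (hx i hi)) (hμ i hi)
      _ = G * log G - G := by rw [← sum_mul, hsum]; ring
  rw [sum_mul_mul_log_sub_add_sq s G hx0] at havg
  linarith

lemma arithMean_sub_geomMean_le_sum_mul_sq (hμ : ∀ i ∈ s, 0 ≤ μ i)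
    (hsum : ∑ i ∈ s, μ i = 1) (hx : ∀ i ∈ s, 1 / 2 ≤ x i) :
    ∑ i ∈ s, μ i * x i - ∏ i ∈ s, x i ^ μ i ≤
      ∑ i ∈ s, μ i * (x i - ∑ j ∈ s, μ j * x j) ^ 2 := by
  set A := ∑ j ∈ s, μ j * x j
  set G := ∏ j ∈ s, x j ^ μ j
  have hx0 : ∀ i ∈ s, 0 < x i := fun i hi => one_half_pos.trans_le (hx i hi)
  have hA : 1 / 2 ≤ A := le_sum_mul_of_forall_le hμ hsum hx
  have hA0 : 0 < A := one_half_pos.trans_le hA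
  have hG0 : 0 < G := prod_pos fun i hi => rpow_pos_of_pos (hx0 i hi) _
  have hpointwise := isMinOn_mul_log_sub_add_sq hA
  have havg : A * log A - A ≤ ∑ i ∈ s, μ i * (A * log (x i) - x i + (x i - A) ^ 2) :=
    calc A * log A - A = ∑ i ∈ s, μ i * (A * log A - A + (A - A) ^ 2) := by
          rw [← sum_mul, hsum]; ring
      _ ≤ _ :=
          sum_le_sum fun i hi => mul_le_mul_of_nonneg_left (hpointwise (hx i hi)) (hμ i hi)
  rw [sum_mul_mul_log_sub_add_sq s A hx0] at havg
  have hlog : A * (log G - log A) ≤ G - A :=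
    calc A * (log G - log A) = A * log (G / A) := by rw [log_div hG0.ne' hA0.ne']
      _ ≤ A * (G / A - 1) :=
          mul_le_mul_of_nonneg_left (log_le_sub_one_of_pos (by positivity)) hA0.le
      _ = G - A := by field_simp
  linarith

end WeightedMeans

/-- Alzer's additive Ky Fan inequality: `A'_n - G'_n ≤ A_n - G_n`. -/
theorem kyFan_additive_arith_geom (n : ℕ) (x μ : Fin n → ℝ)
    (hx : ∀ i, x i ∈ Set.Ioc (0:ℝ) (1/2)) (hμ : ∀ i, 0 ≤ μ i)
    (hsum : ∑ i, μ i = 1)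
    (A G A' G' : ℝ)
    (hA : A = ∑ i, μ i * x i) (hG : G = ∏ i, x i ^ μ i)
    (hA' : A' = ∑ i, μ i * (1 - x i)) (hG' : G' = ∏ i, (1 - x i) ^ μ i) :
    A' - G' ≤ A - G := by
  have hA'_eq : A' = 1 - A := by
    simp only [hA', hA, mul_one_sub, sum_sub_distrib, hsum]
  have hupper := arithMean_sub_geomMean_le_sum_mul_sq (fun i _ => hμ i) hsum
    (x := fun i => 1 - x i) fun i _ => by linarith [(hx i).2]
  have hlower := sum_mul_sq_sub_geomMean_le (fun i _ => hμ i) hsum fun i _ => hx i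
  have hvariance := sum_mul_sq_sub_eq univ (x := x) hsum G
  rw [← hA', ← hG', hA'_eq] at hupper
  rw [← hA, ← hG] at hlower
  rw [← hA] at hvariance
  have hreflect : ∑ i, μ i * (1 - x i - (1 - A)) ^ 2 = ∑ i, μ i * (x i - A) ^ 2 :=
    sum_congr rfl fun i _ => by ring
  linarith [sq_nonneg (A - G)]
end

section
/- For positive reals x_1,...,x_n in (0,1/2] and weights μ_1,...,μ_n ≥ 0 with Σμ_i = 1, let A_n = Σμ_i x_i and H_n = (Σμ_i/x_i)^{-1}, with A'_n, H'_n the corresponding means of x'_i = 1 - x_i. Then A'_n - H'_n ≤ A_n - H_n. -/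
lemma kyFan_Gsorted (u v w : ℝ) (hw : 0 ≤ w) (hwv : w ≤ v) (hvu : v ≤ u) (hu : u ≤ 1) :
    0 ≤ (u-v)^2*(u+v-w*(1+u*v)) + (v-w)^2*(v+w-u*(1+v*w)) + (u-w)^2*(u+w-v*(1+u*w)) := by
  have hv : 0 ≤ v := hw.trans hwv
  have h0 : 0 ≤ u := hv.trans hvu
  have huv : u*v ≤ 1 := by nlinarith
  have ht1 : 0 ≤ u+v-w*(1+u*v) := by nlinarith
  have ht3 : 0 ≤ u+w-v*(1+u*w) := by nlinarith
  have h23 : 0 ≤ 2*w*(1-u*v) := by nlinarith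
  have hsq : 0 ≤ (u-v)*(u+v-2*w) := by nlinarith
  nlinarith [mul_nonneg (sq_nonneg (u-v)) ht1, mul_nonneg (sq_nonneg (v-w)) h23,
    mul_nonneg hsq ht3, sq_nonneg (v-w)]

lemma kyFan_Gnonneg (u v w : ℝ) (hu0 : 0 ≤ u) (hu1 : u ≤ 1) (hv0 : 0 ≤ v) (hv1 : v ≤ 1)
    (hw0 : 0 ≤ w) (hw1 : w ≤ 1) :
    0 ≤ (u-v)^2*(u+v-w*(1+u*v)) + (v-w)^2*(v+w-u*(1+v*w)) + (u-w)^2*(u+w-v*(1+u*w)) := by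
  rcases le_total u v with h1 | h1 <;> rcases le_total v w with h2 | h2 <;>
    rcases le_total u w with h3 | h3
  · nlinarith [kyFan_Gsorted w v u hu0 h1 h2 hw1]
  · nlinarith [kyFan_Gsorted w v u hu0 h1 h2 hw1]
  · nlinarith [kyFan_Gsorted v w u hu0 h3 h2 hv1]
  · nlinarith [kyFan_Gsorted v u w hw0 h3 h1 hv1]
  · nlinarith [kyFan_Gsorted w u v hv0 h1 h3 hw1]
  · nlinarith [kyFan_Gsorted u w v hv0 h2 h3 hu1]
  · nlinarith [kyFan_Gsorted u v w hw0 h2 h1 hu1]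
  · nlinarith [kyFan_Gsorted u v w hw0 h2 h1 hu1]

lemma kyFan_Tnonneg (a b c : ℝ) (ha0 : 0 < a) (ha : a ≤ 1/2) (hb0 : 0 < b) (hb : b ≤ 1/2)
    (hc0 : 0 < c) (hc : c ≤ 1/2) :
    0 ≤ 2*(a⁻¹ - (1-a)⁻¹) + 2*(b⁻¹ - (1-b)⁻¹) + 2*(c⁻¹ - (1-c)⁻¹)
      - (1-2*a)*(b⁻¹*(1-c)⁻¹) - (1-2*a)*((1-b)⁻¹*c⁻¹)
      - a⁻¹*((1-2*b)*(1-c)⁻¹) - (1-a)⁻¹*((1-2*b)*c⁻¹)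
      - a⁻¹*((1-b)⁻¹*(1-2*c)) - (1-a)⁻¹*(b⁻¹*(1-2*c)) := by
  have ha1 : 0 < 1 - a := by linarith
  have hb1 : 0 < 1 - b := by linarith
  have hc1 : 0 < 1 - c := by linarith
  have hG := kyFan_Gnonneg (1-2*a) (1-2*b) (1-2*c) (by linarith) (by linarith) (by linarith)
    (by linarith) (by linarith) (by linarith)
  have hP : 0 ≤ (a-b)^2*(c*(1-a-b)-a*b*(1-2*c)) + (b-c)^2*(a*(1-b-c)-b*c*(1-2*a))
      + (a-c)^2*(b*(1-a-c)-a*c*(1-2*b)) := by nlinarith [hG]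
  have hD : 0 < a*b*c*((1-a)*((1-b)*(1-c))) := by positivity
  have hEq : 2*(a⁻¹ - (1-a)⁻¹) + 2*(b⁻¹ - (1-b)⁻¹) + 2*(c⁻¹ - (1-c)⁻¹)
      - (1-2*a)*(b⁻¹*(1-c)⁻¹) - (1-2*a)*((1-b)⁻¹*c⁻¹)
      - a⁻¹*((1-2*b)*(1-c)⁻¹) - (1-a)⁻¹*((1-2*b)*c⁻¹)
      - a⁻¹*((1-b)⁻¹*(1-2*c)) - (1-a)⁻¹*(b⁻¹*(1-2*c))
      = ((a-b)^2*(c*(1-a-b)-a*b*(1-2*c)) + (b-c)^2*(a*(1-b-c)-b*c*(1-2*a))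
        + (a-c)^2*(b*(1-a-c)-a*c*(1-2*b))) / (a*b*c*((1-a)*((1-b)*(1-c)))) := by
    field_simp
    ring
  rw [hEq]
  exact div_nonneg hP hD.le

/-- Alzer's additive Ky Fan inequality: `A'_n - H'_n ≤ A_n - H_n`. -/
theorem kyFan_additive_arith_harm (n : ℕ) (x μ : Fin n → ℝ)
    (hx : ∀ i, x i ∈ Set.Ioc (0:ℝ) (1/2)) (hμ : ∀ i, 0 ≤ μ i)
    (hsum : ∑ i, μ i = 1)
    (A H A' H' : ℝ)
    (hA : A = ∑ i, μ i * x i) (hH : H = (∑ i, μ i / x i)⁻¹)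
    (hA' : A' = ∑ i, μ i * (1 - x i)) (hH' : H' = (∑ i, μ i / (1 - x i))⁻¹) :
    A' - H' ≤ A - H := by
  have hx1 : ∀ i, 0 < x i := fun i => (hx i).1
  have hx2 : ∀ i, x i ≤ 1/2 := fun i => (hx i).2
  have hx1' : ∀ i, 0 < 1 - x i := fun i => by have := hx2 i; linarith
  have swap13 : ∀ F : Fin n → Fin n → Fin n → ℝ,
      (∑ i, ∑ j, ∑ k, F i j k) = ∑ i, ∑ j, ∑ k, F k j i := by
    intro F
    calc (∑ i, ∑ j, ∑ k, F i j k) = ∑ j, ∑ i, ∑ k, F i j k := Finset.sum_comm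
      _ = ∑ j, ∑ k, ∑ i, F i j k := Finset.sum_congr rfl fun j _ => Finset.sum_comm
      _ = ∑ k, ∑ j, ∑ i, F i j k := Finset.sum_comm
  have hfac : ∀ f g h : Fin n → ℝ,
      (∑ i, ∑ j, ∑ k, μ i * μ j * μ k * (f i * (g j * h k)))
        = (∑ i, μ i * f i) * ((∑ i, μ i * g i) * (∑ i, μ i * h i)) := by
    intro f g h
    rw [swap13 (fun i j k => μ i * μ j * μ k * (f i * (g j * h k)))]
    simp only [Finset.sum_mul, Finset.mul_sum]
    refine Finset.sum_congr rfl fun i _ => Finset.sum_congr rfl fun j _ =>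
      Finset.sum_congr rfl fun k _ => by ring
  -- the symmetrized triple sum is nonnegative
  have h6 : 0 ≤ ∑ i, ∑ j, ∑ k,
      (2*(μ i * μ j * μ k * (((x i)⁻¹ - (1 - x i)⁻¹) * ((1:ℝ) * (1:ℝ))))
       + 2*(μ i * μ j * μ k * ((1:ℝ) * (((x j)⁻¹ - (1 - x j)⁻¹) * (1:ℝ))))
       + 2*(μ i * μ j * μ k * ((1:ℝ) * ((1:ℝ) * ((x k)⁻¹ - (1 - x k)⁻¹))))
       - μ i * μ j * μ k * ((1 - 2*x i) * ((x j)⁻¹ * (1 - x k)⁻¹))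
       - μ i * μ j * μ k * ((1 - 2*x i) * ((1 - x j)⁻¹ * (x k)⁻¹))
       - μ i * μ j * μ k * ((x i)⁻¹ * ((1 - 2*x j) * (1 - x k)⁻¹))
       - μ i * μ j * μ k * ((1 - x i)⁻¹ * ((1 - 2*x j) * (x k)⁻¹))
       - μ i * μ j * μ k * ((x i)⁻¹ * ((1 - x j)⁻¹ * (1 - 2*x k)))
       - μ i * μ j * μ k * ((1 - x i)⁻¹ * ((x j)⁻¹ * (1 - 2*x k)))) := by
    refine Finset.sum_nonneg fun i _ => Finset.sum_nonneg fun j _ =>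
      Finset.sum_nonneg fun k _ => ?_
    have hT := kyFan_Tnonneg (x i) (x j) (x k) (hx1 i) (hx2 i) (hx1 j) (hx2 j) (hx1 k) (hx2 k)
    have hμμμ : (0:ℝ) ≤ μ i * μ j * μ k := mul_nonneg (mul_nonneg (hμ i) (hμ j)) (hμ k)
    nlinarith [mul_nonneg hμμμ hT]
  have expand : (∑ i, ∑ j, ∑ k,
      (2*(μ i * μ j * μ k * (((x i)⁻¹ - (1 - x i)⁻¹) * ((1:ℝ) * (1:ℝ))))
       + 2*(μ i * μ j * μ k * ((1:ℝ) * (((x j)⁻¹ - (1 - x j)⁻¹) * (1:ℝ))))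
       + 2*(μ i * μ j * μ k * ((1:ℝ) * ((1:ℝ) * ((x k)⁻¹ - (1 - x k)⁻¹))))
       - μ i * μ j * μ k * ((1 - 2*x i) * ((x j)⁻¹ * (1 - x k)⁻¹))
       - μ i * μ j * μ k * ((1 - 2*x i) * ((1 - x j)⁻¹ * (x k)⁻¹))
       - μ i * μ j * μ k * ((x i)⁻¹ * ((1 - 2*x j) * (1 - x k)⁻¹))
       - μ i * μ j * μ k * ((1 - x i)⁻¹ * ((1 - 2*x j) * (x k)⁻¹))
       - μ i * μ j * μ k * ((x i)⁻¹ * ((1 - x j)⁻¹ * (1 - 2*x k)))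
       - μ i * μ j * μ k * ((1 - x i)⁻¹ * ((x j)⁻¹ * (1 - 2*x k)))))
      = 6 * (∑ i, μ i * ((x i)⁻¹ - (1 - x i)⁻¹))
        - 6 * ((∑ i, μ i * (1 - 2*x i)) *
            ((∑ i, μ i * (x i)⁻¹) * (∑ i, μ i * (1 - x i)⁻¹))) := by
    simp only [Finset.sum_add_distrib, Finset.sum_sub_distrib, ← Finset.mul_sum, hfac]
    simp only [mul_one, hsum]
    ring
  rw [expand] at h6
  have key : (∑ i, μ i * (1 - 2*x i)) *
      ((∑ i, μ i * (x i)⁻¹) * (∑ i, μ i * (1 - x i)⁻¹))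
      ≤ ∑ i, μ i * ((x i)⁻¹ - (1 - x i)⁻¹) := by linarith
  -- positivity of the sums
  have hex : ∃ i, 0 < μ i := by
    by_contra hc
    push_neg at hc
    have h0 : ∑ i, μ i = 0 := Finset.sum_eq_zero fun i _ => le_antisymm (hc i) (hμ i)
    rw [h0] at hsum; norm_num at hsum
  obtain ⟨i0, hi0⟩ := hex
  have hSpos : 0 < ∑ i, μ i * (x i)⁻¹ :=
    Finset.sum_pos' (fun i _ => mul_nonneg (hμ i) (inv_nonneg.2 (hx1 i).le))
      ⟨i0, Finset.mem_univ i0, mul_pos hi0 (inv_pos.2 (hx1 i0))⟩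
  have hS'pos : 0 < ∑ i, μ i * (1 - x i)⁻¹ :=
    Finset.sum_pos' (fun i _ => mul_nonneg (hμ i) (inv_nonneg.2 (hx1' i).le))
      ⟨i0, Finset.mem_univ i0, mul_pos hi0 (inv_pos.2 (hx1' i0))⟩
  -- rewrite the various sums
  have hSr : (∑ i, μ i / x i) = ∑ i, μ i * (x i)⁻¹ := by
    simp only [div_eq_mul_inv]
  have hSs : (∑ i, μ i / (1 - x i)) = ∑ i, μ i * (1 - x i)⁻¹ := by
    simp only [div_eq_mul_inv]
  have hdiff : ∑ i, μ i * ((x i)⁻¹ - (1 - x i)⁻¹)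
      = (∑ i, μ i * (x i)⁻¹) - ∑ i, μ i * (1 - x i)⁻¹ := by
    rw [← Finset.sum_sub_distrib]
    exact Finset.sum_congr rfl fun i _ => by ring
  have humean : ∑ i, μ i * (1 - 2*x i) = 1 - 2*A := by
    have : ∀ i ∈ Finset.univ, μ i * (1 - 2*x i) = μ i - 2*(μ i * x i) := fun i _ => by ring
    rw [Finset.sum_congr rfl this, Finset.sum_sub_distrib, hsum, ← Finset.mul_sum, ← hA]
  have hA'eq : A' = 1 - A := by
    have : ∀ i ∈ Finset.univ, μ i * (1 - x i) = μ i - μ i * x i := fun i _ => by ring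
    rw [hA', Finset.sum_congr rfl this, Finset.sum_sub_distrib, hsum, ← hA]
  rw [humean, hdiff] at key
  -- finish
  rw [hA'eq, hH, hH', hSr, hSs]
  set S := ∑ i, μ i * (x i)⁻¹
  set S' := ∑ i, μ i * (1 - x i)⁻¹
  have hq : (1 - 2*A) ≤ (S - S') / (S * S') :=
    (le_div_iff₀ (mul_pos hSpos hS'pos)).mpr key
  have heq2 : (S - S') / (S * S') = S'⁻¹ - S⁻¹ := by
    field_simp
  linarith
end

section
/- For positive reals x_1,...,x_n in (0,1/2] with weights μ_i ≥ 0 summing to 1, one has 1/H'_n - 1/A'_n ≤ 1/H_n - 1/A_n, where A, H are the weighted arithmetic and harmonic means and primes denote means of 1 - x_i. -/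
lemma tangent_kf (a x : ℝ) (ha : 0 < a) (ha2 : a ≤ 1/2) (hx : 0 < x) (hx2 : x ≤ 1/2) :
    1/a - 1/(1-a) + (-(1/a^2) - 1/(1-a)^2) * (x - a) ≤ 1/x - 1/(1-x) := by
  have h1a : (0:ℝ) < 1 - a := by linarith
  have h1x : (0:ℝ) < 1 - x := by linarith
  have key : 0 ≤ (x - a)^2 * ((1-a)^2*(1-x) - a^2*x) := by
    apply mul_nonneg (sq_nonneg _)
    nlinarith
  have e : 1/x - 1/(1-x) - (1/a - 1/(1-a) + (-(1/a^2) - 1/(1-a)^2) * (x - a))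
      = (x - a)^2 * ((1-a)^2*(1-x) - a^2*x) / (a^2 * x * (1-a)^2 * (1-x)) := by
    field_simp
    ring
  nlinarith [div_nonneg key (le_of_lt (by positivity : (0:ℝ) < a^2 * x * (1-a)^2 * (1-x)))]

/-- The reciprocal additive Ky Fan type inequality `1/H'_n - 1/A'_n ≤ 1/H_n - 1/A_n`. -/
theorem kyFan_reciprocal_harm_arith (n : ℕ) (x μ : Fin n → ℝ)
    (hx : ∀ i, x i ∈ Set.Ioc (0:ℝ) (1/2)) (hμ : ∀ i, 0 ≤ μ i)
    (hsum : ∑ i, μ i = 1)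
    (A H A' H' : ℝ)
    (hA : A = ∑ i, μ i * x i) (hH : H = (∑ i, μ i / x i)⁻¹)
    (hA' : A' = ∑ i, μ i * (1 - x i)) (hH' : H' = (∑ i, μ i / (1 - x i))⁻¹) :
    1 / H' - 1 / A' ≤ 1 / H - 1 / A := by
  have hxp : ∀ i, 0 < x i := fun i => (hx i).1
  have hxh : ∀ i, x i ≤ 1/2 := fun i => (hx i).2
  -- A' = 1 - A
  have hA'eq : A' = 1 - A := by
    have : ∀ i, μ i * (1 - x i) = μ i - μ i * x i := fun i => by ring
    rw [hA', hA]
    rw [Finset.sum_congr rfl (fun i _ => this i), Finset.sum_sub_distrib, hsum]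
  -- 0 < A
  have hApos : 0 < A := by
    rcases lt_or_eq_of_le (Finset.sum_nonneg (fun i _ =>
        mul_nonneg (hμ i) (hxp i).le) : (0:ℝ) ≤ ∑ i, μ i * x i) with h | h
    · rwa [hA]
    · exfalso
      have : ∀ i ∈ Finset.univ, μ i = 0 := by
        intro i _
        have hz := (Finset.sum_eq_zero_iff_of_nonneg
          (fun i _ => mul_nonneg (hμ i) (hxp i).le)).mp h.symm i (Finset.mem_univ i)
        rcases mul_eq_zero.mp hz with h' | h'
        · exact h'
        · exact absurd h' (ne_of_gt (hxp i))
      have : (∑ i, μ i) = 0 := Finset.sum_eq_zero this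
      rw [hsum] at this; norm_num at this
  -- A ≤ 1/2
  have hAle : A ≤ 1/2 := by
    rw [hA]
    calc ∑ i, μ i * x i ≤ ∑ i, μ i * (1/2) :=
          Finset.sum_le_sum (fun i _ => mul_le_mul_of_nonneg_left (hxh i) (hμ i))
      _ = 1/2 := by rw [← Finset.sum_mul, hsum]; ring
  have h1A : (0:ℝ) < 1 - A := by linarith
  -- 1/H = ∑ μ/x, 1/H' = ∑ μ/(1-x)
  have hHeq : 1 / H = ∑ i, μ i / x i := by rw [hH, one_div, inv_inv]
  have hH'eq : 1 / H' = ∑ i, μ i / (1 - x i) := by rw [hH', one_div, inv_inv]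
  rw [hHeq, hH'eq, hA'eq]
  -- key Jensen via tangent line
  have key : ∀ i, μ i * (1/A - 1/(1-A) + (-(1/A^2) - 1/(1-A)^2) * (x i - A))
      ≤ μ i * (1 / x i - 1/(1 - x i)) := fun i =>
    mul_le_mul_of_nonneg_left (tangent_kf A (x i) hApos hAle (hxp i) (hxh i)) (hμ i)
  have hsum2 : ∑ i, μ i * (1/A - 1/(1-A) + (-(1/A^2) - 1/(1-A)^2) * (x i - A))
      ≤ ∑ i, μ i * (1 / x i - 1/(1 - x i)) :=
    Finset.sum_le_sum (fun i _ => key i)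
  have lhs_eq : ∑ i, μ i * (1/A - 1/(1-A) + (-(1/A^2) - 1/(1-A)^2) * (x i - A))
      = 1/A - 1/(1-A) := by
    have : ∀ i, μ i * (1/A - 1/(1-A) + (-(1/A^2) - 1/(1-A)^2) * (x i - A))
        = (1/A - 1/(1-A) - (-(1/A^2) - 1/(1-A)^2) * A) * μ i
          + (-(1/A^2) - 1/(1-A)^2) * (μ i * x i) := fun i => by ring
    rw [Finset.sum_congr rfl (fun i _ => this i), Finset.sum_add_distrib,
      ← Finset.mul_sum, ← Finset.mul_sum, hsum, ← hA]
    ring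
  have rhs_eq : ∑ i, μ i * (1 / x i - 1/(1 - x i))
      = (∑ i, μ i / x i) - ∑ i, μ i / (1 - x i) := by
    rw [← Finset.sum_sub_distrib]
    congr 1; ext i
    rw [mul_sub, mul_one_div, mul_one_div]
  rw [lhs_eq, rhs_eq] at hsum2
  linarith
end

section
/- For positive reals x_1,...,x_n in (0,1/2] with weights μ_i ≥ 0 summing to 1, one has A'_n/H'_n ≤ A_n/H_n, where A and H denote the weighted arithmetic and harmonic means and primes denote means of 1 - x_i. -/
lemma kyFan_pair (a b : ℝ) (ha : 0 < a) (ha2 : a ≤ 1/2) (hb : 0 < b) (hb2 : b ≤ 1/2) :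
    (1 - a) / (1 - b) + (1 - b) / (1 - a) ≤ a / b + b / a := by
  have h1a : 0 < 1 - a := by linarith
  have h1b : 0 < 1 - b := by linarith
  rw [div_add_div _ _ h1b.ne' h1a.ne', div_add_div _ _ hb.ne' ha.ne',
    div_le_div_iff₀ (by positivity) (by positivity)]
  nlinarith [mul_nonneg (sq_nonneg (a - b)) (by linarith : (0:ℝ) ≤ 1 - a - b),
    mul_pos ha hb, mul_pos h1a h1b]

/-- The multiplicative Ky Fan type inequality `A'_n/H'_n ≤ A_n/H_n`. -/
theorem kyFan_multiplicative_arith_harm (n : ℕ) (x μ : Fin n → ℝ)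
    (hx : ∀ i, x i ∈ Set.Ioc (0:ℝ) (1/2)) (hμ : ∀ i, 0 ≤ μ i)
    (hsum : ∑ i, μ i = 1)
    (A H A' H' : ℝ)
    (hA : A = ∑ i, μ i * x i) (hH : H = (∑ i, μ i / x i)⁻¹)
    (hA' : A' = ∑ i, μ i * (1 - x i)) (hH' : H' = (∑ i, μ i / (1 - x i))⁻¹) :
    A' / H' ≤ A / H := by
  subst hA hH hA' hH'
  rw [div_eq_mul_inv, div_eq_mul_inv, inv_inv, inv_inv, Finset.sum_mul_sum, Finset.sum_mul_sum]
  have key : ∀ i j : Fin n,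
      (μ i * (1 - x i)) * (μ j / (1 - x j)) + (μ j * (1 - x j)) * (μ i / (1 - x i))
        ≤ (μ i * x i) * (μ j / x j) + (μ j * x j) * (μ i / x i) := by
    intro i j
    obtain ⟨hxi, hxi2⟩ := hx i
    obtain ⟨hxj, hxj2⟩ := hx j
    have base := kyFan_pair (x i) (x j) hxi hxi2 hxj hxj2
    have hμμ : 0 ≤ μ i * μ j := mul_nonneg (hμ i) (hμ j)
    simp only [div_eq_mul_inv] at base ⊢
    nlinarith [mul_le_mul_of_nonneg_left base hμμ]
  have h2 : ∀ f : Fin n → Fin n → ℝ,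
      (2:ℝ) * ∑ i, ∑ j, f i j = ∑ i, ∑ j, (f i j + f j i) := by
    intro f
    rw [two_mul]
    simp only [Finset.sum_add_distrib]
    rw [Finset.sum_comm (f := fun i j => f j i)]
  have hsumle := Finset.sum_le_sum (fun i (_ : i ∈ Finset.univ) =>
    Finset.sum_le_sum (fun j (_ : j ∈ Finset.univ) => key i j))
  have e1 := h2 (fun i j => (μ i * (1 - x i)) * (μ j / (1 - x j)))
  have e2 := h2 (fun i j => (μ i * x i) * (μ j / x j))
  linarith
end

section
/- Let 0 ≤ μ ≤ 1. For all positive invertible operators (or positive definite matrices) A and B, the identity A∇_μB - A!_μB = μ(1-μ)(A - B)(B∇_μA)^{-1}(A - B) holds, where A∇_μB = (1-μ)A + μB and A!_μB = ((1-μ)A^{-1} + μB^{-1})^{-1}. -/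
open Matrix ComplexOrder

/-- Matrix square root via the real continuous functional calculus. -/
noncomputable def msqrt {n : ℕ} (A : Matrix (Fin n) (Fin n) ℂ) :
    Matrix (Fin n) (Fin n) ℂ :=
  cfc Real.sqrt A

/-- The Kubo–Ando mean associated to a representing function `f`:
`A σ_f B = A^{1/2} f(A^{-1/2} B A^{-1/2}) A^{1/2}`. -/
noncomputable def opMean {n : ℕ} (f : ℝ → ℝ) (A B : Matrix (Fin n) (Fin n) ℂ) :
    Matrix (Fin n) (Fin n) ℂ :=
  msqrt A * cfc f ((msqrt A)⁻¹ * B * (msqrt A)⁻¹) * msqrt A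

/-- A function `f : ℝ → ℝ` is operator monotone on `[0,∞)` if it is monotone for the
Löwner order on positive semidefinite matrices of every size. -/
def OperatorMonotone (f : ℝ → ℝ) : Prop :=
  ∀ (n : ℕ) (A B : Matrix (Fin n) (Fin n) ℂ), A.PosSemidef → B.PosSemidef →
    (B - A).PosSemidef → (cfc f B - cfc f A).PosSemidef

/-! With `P = B∇_μA` one has `(1-μ)A⁻¹ + μB⁻¹ = A⁻¹PB⁻¹ = B⁻¹PA⁻¹`, so `A!_μB = BP⁻¹A = AP⁻¹B`.
Substituting `A = AP⁻¹P` and `B = BP⁻¹P` into `A∇_μB` leaves only the words `AP⁻¹A`, `AP⁻¹B`,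
`BP⁻¹B`, and the identity reduces to `(1-μ)² + μ² + 2μ(1-μ) = 1`. The argument works in any
algebra for invertible `A`, `B`, `P`; positive definiteness makes `P` invertible. -/

open scoped Ring

def weightedArithMean {𝕜 M : Type*} [Ring 𝕜] [AddCommMonoid M] [Module 𝕜 M]
    (t : 𝕜) (a b : M) : M :=
  (1 - t) • a + t • b

section WeightedMeans

variable {𝕜 R : Type*} [CommRing 𝕜] [Ring R] [Algebra 𝕜 R]

noncomputable def weightedHarmMean (t : 𝕜) (a b : R) : R := ((1 - t) • a⁻¹ʳ + t • b⁻¹ʳ)⁻¹ʳ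

variable {a b : R}

theorem smul_inverse_add_smul_inverse_eq_left (ha : IsUnit a) (hb : IsUnit b) (t : 𝕜) :
    (1 - t) • a⁻¹ʳ + t • b⁻¹ʳ = a⁻¹ʳ * weightedArithMean t b a * b⁻¹ʳ := by
  simp only [weightedArithMean, mul_add, add_mul, mul_smul_comm, smul_mul_assoc,
    Ring.mul_inverse_cancel_right _ _ hb, Ring.inverse_mul_cancel _ ha, one_mul]

theorem smul_inverse_add_smul_inverse_eq_right (ha : IsUnit a) (hb : IsUnit b) (t : 𝕜) :
    (1 - t) • a⁻¹ʳ + t • b⁻¹ʳ = b⁻¹ʳ * weightedArithMean t b a * a⁻¹ʳ := by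
  simp only [weightedArithMean, mul_add, add_mul, mul_smul_comm, smul_mul_assoc,
    Ring.mul_inverse_cancel_right _ _ ha, Ring.inverse_mul_cancel _ hb, one_mul]

theorem weightedHarmMean_eq_mul_inverse_mul_left (ha : IsUnit a) (hb : IsUnit b) (t : 𝕜) :
    weightedHarmMean t a b = b * (weightedArithMean t b a)⁻¹ʳ * a := by
  rw [weightedHarmMean, smul_inverse_add_smul_inverse_eq_left ha hb,
    Ring.inverse_mul (.inr hb.ringInverse), Ring.inverse_mul (.inl ha.ringInverse),
    Ring.inverse_inverse ha, Ring.inverse_inverse hb, mul_assoc]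

theorem weightedHarmMean_eq_mul_inverse_mul_right (ha : IsUnit a) (hb : IsUnit b) (t : 𝕜) :
    weightedHarmMean t a b = a * (weightedArithMean t b a)⁻¹ʳ * b := by
  rw [weightedHarmMean, smul_inverse_add_smul_inverse_eq_right ha hb,
    Ring.inverse_mul (.inr ha.ringInverse), Ring.inverse_mul (.inl hb.ringInverse),
    Ring.inverse_inverse ha, Ring.inverse_inverse hb, mul_assoc]

theorem weightedArithMean_sub_weightedHarmMean (ha : IsUnit a) (hb : IsUnit b) {t : 𝕜}
    (hp : IsUnit (weightedArithMean t b a)) :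
    weightedArithMean t a b - weightedHarmMean t a b =
      (t * (1 - t)) • ((a - b) * (weightedArithMean t b a)⁻¹ʳ * (a - b)) := by
  set q := (weightedArithMean t b a)⁻¹ʳ
  have hqa : a = (1 - t) • (a * q * b) + t • (a * q * a) := by
    conv_lhs => rw [← Ring.inverse_mul_cancel_right _ a hp]
    simp only [q, weightedArithMean, mul_add, mul_smul_comm, mul_assoc]
  have hqb : b = (1 - t) • (b * q * b) + t • (b * q * a) := by
    conv_lhs => rw [← Ring.inverse_mul_cancel_right _ b hp]
    simp only [q, weightedArithMean, mul_add, mul_smul_comm, mul_assoc]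
  have hcomm : b * q * a = a * q * b :=
    (weightedHarmMean_eq_mul_inverse_mul_left ha hb t).symm.trans
      (weightedHarmMean_eq_mul_inverse_mul_right ha hb t)
  rw [weightedArithMean, weightedHarmMean_eq_mul_inverse_mul_left ha hb t]
  simp only [sub_mul, mul_sub]
  rw [hcomm] at hqb ⊢
  linear_combination (norm := module) (1 - t) • hqa + t • hqb

end WeightedMeans

theorem Matrix.PosDef.weightedArithMean {m 𝕜 : Type*} [Fintype m] [RCLike 𝕜]
    {A B : Matrix m m 𝕜} (hA : A.PosDef) (hB : B.PosDef) {t : ℝ} (ht0 : 0 ≤ t) (ht1 : t ≤ 1) :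
    (weightedArithMean t A B).PosDef := by
  rcases ht1.lt_or_eq with ht1 | rfl
  · exact (hA.smul (sub_pos.2 ht1)).add_posSemidef (hB.posSemidef.smul ht0)
  · simpa [_root_.weightedArithMean] using hB

/-- `A∇_μB - A!_μB = μ(1-μ)(A-B)(B∇_μA)⁻¹(A-B)` for positive definite `A, B`. -/
theorem arith_harm_difference_identity (n : ℕ) (μ : ℝ) (hμ0 : 0 ≤ μ) (hμ1 : μ ≤ 1)
    (A B : Matrix (Fin n) (Fin n) ℂ) (hA : A.PosDef) (hB : B.PosDef) :
    ((1 - μ) • A + μ • B) - ((1 - μ) • A⁻¹ + μ • B⁻¹)⁻¹ =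
      (μ * (1 - μ)) • ((A - B) * ((1 - μ) • B + μ • A)⁻¹ * (A - B)) := by
  have hP := hB.weightedArithMean hA hμ0 hμ1
  simp only [nonsing_inv_eq_ringInverse]
  exact weightedArithMean_sub_weightedHarmMean hA.isUnit hB.isUnit hP.isUnit
end

section
/- For positive definite matrices A and B, A∇B - A♯B = (1/8)(A-B)((A∇B + A♯B)/2)^{-1}(A-B), where ∇ is the arithmetic mean and ♯ the geometric mean with weight 1/2. -/
open Matrix ComplexOrder

/-!
Put `S = A^{1/2}` and `T = (S⁻¹ B S⁻¹)^{1/2}`, so that `A = S²`, `B = S T² S` and `A♯B = S T S`.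
Every term of the identity is then `S X S` for the corresponding term at `A = 1`, `B = T²`, and
`S X S (S Y S)⁻¹ S Z S = S (X Y⁻¹ Z) S`, so it suffices to treat `A = 1`. There the middle factor
is `((1 + T) / 2)²` and `1 - T² = (1 - T)(1 + T) = (1 + T)(1 - T)`, so both sides equal
`(1 - T)² / 2`.
-/

section SquareRoot

open scoped MatrixOrder

variable {n : ℕ} {A : Matrix (Fin n) (Fin n) ℂ}

lemma msqrt_eq_cfcSqrt (hA : A.PosSemidef) : msqrt A = CFC.sqrt A := by
  rw [msqrt, CFC.sqrt_eq_real_sqrt A hA.nonneg]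
  exact (cfcₙ_eq_cfc (hf0 := Real.sqrt_zero)).symm

lemma posSemidef_msqrt (hA : A.PosSemidef) : (msqrt A).PosSemidef := by
  rw [msqrt_eq_cfcSqrt hA]
  exact (CFC.sqrt_nonneg A).posSemidef

lemma msqrt_mul_msqrt (hA : A.PosSemidef) : msqrt A * msqrt A = A := by
  rw [msqrt_eq_cfcSqrt hA]
  exact CFC.sqrt_mul_sqrt_self A hA.nonneg

lemma isUnit_det_msqrt (hA : A.PosDef) : IsUnit (msqrt A).det := by
  refine isUnit_of_mul_isUnit_left (y := (msqrt A).det) ?_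
  rw [← det_mul, msqrt_mul_msqrt hA.posSemidef]
  exact (isUnit_iff_isUnit_det A).mp hA.isUnit

end SquareRoot

section Sandwich

variable {m R : Type*} [Fintype m] [DecidableEq m] [CommRing R]

lemma Matrix.PosSemidef.inv_mul_mul_inv [PartialOrder R] [StarRing R] {S B : Matrix m m R}
    (hB : B.PosSemidef) (hS : S.IsHermitian) : (S⁻¹ * B * S⁻¹).PosSemidef := by
  have h := hB.mul_mul_conjTranspose_same S⁻¹
  rwa [conjTranspose_nonsing_inv, hS.eq] at h

lemma mul_nonsing_inv_sandwich_mul {S : Matrix m m R} (hS : IsUnit S.det) (B : Matrix m m R) :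
    S * (S⁻¹ * B * S⁻¹) * S = B := by
  rw [← Matrix.mul_assoc, mul_nonsing_inv_cancel_left _ _ hS, nonsing_inv_mul_cancel_right _ _ hS]

lemma sandwich_mul_inv_mul_sandwich {S : Matrix m m R} (hS : IsUnit S.det)
    (X Y Z : Matrix m m R) :
    S * X * S * (S * Y * S)⁻¹ * (S * Z * S) = S * (X * Y⁻¹ * Z) * S := by
  simp only [Matrix.mul_inv_rev, Matrix.mul_assoc, mul_nonsing_inv_cancel_left _ _ hS,
    nonsing_inv_mul_cancel_left _ _ hS]

variable [Algebra ℝ R]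

lemma arith_sub_geom_eq_at_one {T : Matrix m m R} (hT : IsUnit (1 + T).det) :
    (2:ℝ)⁻¹ • (1 + T * T) - T =
      (8:ℝ)⁻¹ • ((1 - T * T) * ((2:ℝ)⁻¹ • ((2:ℝ)⁻¹ • (1 + T * T) + T))⁻¹ * (1 - T * T)) := by
  set U := (1 + T)⁻¹
  have hmean : (2:ℝ)⁻¹ • ((2:ℝ)⁻¹ • (1 + T * T) + T) = (4:ℝ)⁻¹ • ((1 + T) * (1 + T)) := by
    simp only [add_mul, mul_add, one_mul, mul_one]
    module
  have hmean_inv : ((4:ℝ)⁻¹ • ((1 + T) * (1 + T)))⁻¹ = (4:ℝ) • (U * U) := by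
    apply inv_eq_right_inv
    rw [smul_mul_smul_comm, Matrix.mul_assoc, mul_nonsing_inv_cancel_left _ _ hT,
      mul_nonsing_inv _ hT]
    norm_num
  have hleft : (1 - T * T) * U = 1 - T := by
    rw [show 1 - T * T = (1 - T) * (1 + T) by noncomm_ring, mul_nonsing_inv_cancel_right _ _ hT]
  have hright : U * (1 - T * T) = 1 - T := by
    rw [show 1 - T * T = (1 + T) * (1 - T) by noncomm_ring, nonsing_inv_mul_cancel_left _ _ hT]
  calc (2:ℝ)⁻¹ • (1 + T * T) - T = (2:ℝ)⁻¹ • ((1 - T) * (1 - T)) := by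
        simp only [sub_mul, mul_sub, one_mul, mul_one]
        module
    _ = (8:ℝ)⁻¹ • ((1 - T * T) * ((4:ℝ) • (U * U)) * (1 - T * T)) := by
        rw [mul_smul_comm, smul_mul_assoc, smul_smul, ← Matrix.mul_assoc, hleft, Matrix.mul_assoc,
          hright]
        norm_num
    _ = _ := by rw [hmean, hmean_inv]

lemma arith_sub_geom_eq_sandwich {S T : Matrix m m R} (hS : IsUnit S.det)
    (hT : IsUnit (1 + T).det) :
    (2:ℝ)⁻¹ • (S * S + S * (T * T) * S) - S * T * S =
      (8:ℝ)⁻¹ • ((S * S - S * (T * T) * S) *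
        ((2:ℝ)⁻¹ • ((2:ℝ)⁻¹ • (S * S + S * (T * T) * S) + S * T * S))⁻¹ *
        (S * S - S * (T * T) * S)) := by
  have smul_sandwich (c : ℝ) (X : Matrix m m R) : c • (S * X * S) = S * (c • X) * S := by
    rw [mul_smul_comm, smul_mul_assoc]
  have hsum : S * S + S * (T * T) * S = S * (1 + T * T) * S := by noncomm_ring
  have hdiff : S * S - S * (T * T) * S = S * (1 - T * T) * S := by noncomm_ring
  rw [hsum, hdiff, smul_sandwich, ← add_mul, ← mul_add, smul_sandwich,
    sandwich_mul_inv_mul_sandwich hS, smul_sandwich, ← sub_mul, ← mul_sub,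
    arith_sub_geom_eq_at_one hT]

end Sandwich

/-- `A∇B - A♯B = (1/8)(A-B)((A∇B + A♯B)/2)⁻¹(A-B)` for positive definite `A, B`. -/
theorem arith_geom_difference_identity (n : ℕ)
    (A B : Matrix (Fin n) (Fin n) ℂ) (hA : A.PosDef) (hB : B.PosDef) :
    ((2:ℝ)⁻¹ • (A + B)) - opMean Real.sqrt A B =
      (8:ℝ)⁻¹ • ((A - B) *
        ((2:ℝ)⁻¹ • ((2:ℝ)⁻¹ • (A + B) + opMean Real.sqrt A B))⁻¹ * (A - B)) := by
  set S := msqrt A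
  set T := msqrt (S⁻¹ * B * S⁻¹)
  have hS : IsUnit S.det := isUnit_det_msqrt hA
  have hC : (S⁻¹ * B * S⁻¹).PosSemidef :=
    hB.posSemidef.inv_mul_mul_inv (posSemidef_msqrt hA.posSemidef).isHermitian
  have hT : IsUnit (1 + T).det :=
    (isUnit_iff_isUnit_det _).mp (PosDef.one.add_posSemidef (posSemidef_msqrt hC)).isUnit
  have hA_eq : A = S * S := (msqrt_mul_msqrt hA.posSemidef).symm
  have hB_eq : B = S * (T * T) * S := by
    rw [msqrt_mul_msqrt hC, mul_nonsing_inv_sandwich_mul hS]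
  rw [show opMean Real.sqrt A B = S * T * S from rfl, hA_eq, hB_eq]
  exact arith_sub_geom_eq_sandwich hS hT
end

section
/- Let 0 ≤ μ ≤ 1. If A, B are positive definite with 0 < A, B ≤ (1/2)I, and A' = I - A, B' = I - B, then A'∇_μB' - A'!_μB' ≤ A∇_μB - A!_μB in the Löwner order, with equality (when 0 < μ < 1) if and only if A = B. -/
open Matrix ComplexOrder

open scoped MatrixOrder

/-!
Write `C = B ∇_μ A`. For invertible `A`, `B` the ring identity
`A ∇_μ B - A !_μ B = μ(1-μ) (A - B) C⁻¹ (A - B)` holds, and the complements `A' = I - A`,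
`B' = I - B` have the same difference up to sign and centre `I - C`. Hence the difference of the
two gaps is `μ(1-μ) (A - B) (C⁻¹ - (I - C)⁻¹) (A - B)`, which is positive semidefinite because
`C ≤ ½I ≤ I - C` and inversion is operator antitone. If it vanishes for `0 < μ < 1`, then
`C⁻¹ - (I - C)⁻¹ = C⁻¹ (I - 2C) (I - C)⁻¹` kills `A - B`, so `½I - C`, and with it both
`½I - A` and `½I - B`, kill `A - B`; subtracting gives `(A - B)² = 0`.
-/

section ArithMean

variable {S M : Type*} [CommRing S] [AddCommGroup M] [Module S M]

def arithMean (t : S) (a b : M) : M := (1 - t) • a + t • b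

theorem sub_arithMean (t : S) (c a b : M) :
    c - arithMean t a b = arithMean t (c - a) (c - b) := by
  unfold arithMean
  module

end ArithMean

section HarmMean

variable {n R S : Type*} [Fintype n] [DecidableEq n] [CommRing R] [CommRing S] [Algebra S R]

/-- Meaningful only when `A`, `B` and `(1 - t) • A⁻¹ + t • B⁻¹` are invertible: `Matrix.inv`
is `0` on singular matrices. -/
noncomputable def harmMean (t : S) (A B : Matrix n n R) : Matrix n n R :=
  ((1 - t) • A⁻¹ + t • B⁻¹)⁻¹

theorem harmMean_eq {t : S} {A B : Matrix n n R} (hA : IsUnit A) (hB : IsUnit B)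
    (hC : IsUnit (arithMean t B A)) :
    harmMean t A B = A * (arithMean t B A)⁻¹ * B := by
  have := hA.invertible
  have := hB.invertible
  have := hC.invertible
  have h : (1 - t) • A⁻¹ + t • B⁻¹ = B⁻¹ * arithMean t B A * A⁻¹ := by
    simp only [arithMean, Matrix.mul_add, Matrix.add_mul, Matrix.mul_smul, Matrix.smul_mul,
      inv_mul_of_invertible, Matrix.mul_assoc, mul_inv_of_invertible, Matrix.mul_one,
      Matrix.one_mul]
  rw [harmMean, h, Matrix.mul_inv_rev, Matrix.mul_inv_rev, inv_inv_of_invertible,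
    inv_inv_of_invertible, Matrix.mul_assoc]

theorem arithMean_sub_harmMean {t : S} {A B : Matrix n n R} (hA : IsUnit A) (hB : IsUnit B)
    (hC : IsUnit (arithMean t B A)) :
    arithMean t A B - harmMean t A B =
      (t * (1 - t)) • ((A - B) * (arithMean t B A)⁻¹ * (A - B)) := by
  have := hC.invertible
  rw [harmMean_eq hA hB hC]
  set C := arithMean t B A
  have hAC : A - C = (1 - t) • (A - B) := by simp only [C, arithMean]; module
  have hCB : C - B = t • (A - B) := by simp only [C, arithMean]; module
  have hAB : arithMean t A B = A + B - C := by simp only [C, arithMean]; module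
  calc arithMean t A B - A * C⁻¹ * B = (A - C) * C⁻¹ * (C - B) := by
        rw [hAB]
        simp only [Matrix.sub_mul, Matrix.mul_sub, Matrix.mul_assoc, inv_mul_of_invertible,
          mul_inv_cancel_left_of_invertible, Matrix.mul_one]
        abel
    _ = (t * (1 - t)) • ((A - B) * C⁻¹ * (A - B)) := by
        rw [hAC, hCB, Matrix.smul_mul, Matrix.smul_mul, Matrix.mul_smul, smul_smul, mul_comm]

end HarmMean

section Loewner

variable {n 𝕜 : Type*} [RCLike 𝕜]

theorem Matrix.posSemidef_arithMean {A B : Matrix n n 𝕜} (hA : A.PosSemidef)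
    (hB : B.PosSemidef) {t : ℝ} (ht0 : 0 ≤ t) (ht1 : t ≤ 1) : (arithMean t A B).PosSemidef :=
  (hA.smul (sub_nonneg.mpr ht1)).add (hB.smul ht0)

theorem Matrix.posDef_arithMean {A B : Matrix n n 𝕜} (hA : A.PosDef) (hB : B.PosDef) {t : ℝ}
    (ht0 : 0 ≤ t) (ht1 : t ≤ 1) : (arithMean t A B).PosDef := by
  rcases ht1.lt_or_eq with ht1 | rfl
  · exact (hA.smul (sub_pos.mpr ht1)).add_posSemidef (hB.posSemidef.smul ht0)
  · simpa [arithMean] using hB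

theorem Matrix.posDef_one_sub_of_posSemidef_half_sub [DecidableEq n] {A : Matrix n n 𝕜}
    (hA : ((2 : ℝ)⁻¹ • 1 - A).PosSemidef) : (1 - A).PosDef := by
  have h : 1 - A = (2 : ℝ)⁻¹ • 1 + ((2 : ℝ)⁻¹ • 1 - A) := by module
  rw [h]
  exact (PosDef.one.smul (by norm_num)).add_posSemidef hA

variable [Fintype n]

theorem Matrix.PosSemidef.mul_eq_zero_of_conjTranspose_mul_mul_eq_zero {M X : Matrix n n 𝕜}
    (hM : M.PosSemidef) (h : Xᴴ * M * X = 0) : M * X = 0 := by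
  classical
  obtain ⟨B, rfl⟩ := CStarAlgebra.nonneg_iff_eq_star_mul_self.mp hM.nonneg
  have hBX : (B * X)ᴴ * (B * X) = 0 := by
    rw [← h, star_eq_conjTranspose, conjTranspose_mul]
    simp only [Matrix.mul_assoc]
  rw [Matrix.mul_assoc, conjTranspose_mul_self_eq_zero.mp hBX, Matrix.mul_zero]

theorem Matrix.mul_eq_zero_of_arithMean_mul_eq_zero {P Q X : Matrix n n 𝕜}
    (hP : P.PosSemidef) (hQ : Q.PosSemidef) {t : ℝ} (ht0 : 0 < t) (ht1 : t < 1)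
    (h : arithMean t P Q * X = 0) : P * X = 0 ∧ Q * X = 0 := by
  have hsum : (1 - t) • (Xᴴ * P * X) + t • (Xᴴ * Q * X) = 0 := by
    simpa [arithMean, Matrix.mul_add, Matrix.add_mul, Matrix.mul_assoc] using
      congrArg (Xᴴ * ·) h
  obtain ⟨hP0, hQ0⟩ := (add_eq_zero_iff_of_nonneg
    ((hP.conjTranspose_mul_mul_same X).smul (sub_nonneg.mpr ht1.le)).nonneg
    ((hQ.conjTranspose_mul_mul_same X).smul ht0.le).nonneg).mp hsum
  exact ⟨hP.mul_eq_zero_of_conjTranspose_mul_mul_eq_zero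
      ((smul_eq_zero.mp hP0).resolve_left (sub_ne_zero.mpr ht1.ne')),
    hQ.mul_eq_zero_of_conjTranspose_mul_mul_eq_zero ((smul_eq_zero.mp hQ0).resolve_left ht0.ne')⟩

variable [DecidableEq n]

theorem Matrix.eq_of_half_sub_arithMean_mul_sub_eq_zero {A B : Matrix n n 𝕜}
    (hA : A.IsHermitian) (hB : B.IsHermitian) (hA2 : ((2 : ℝ)⁻¹ • 1 - A).PosSemidef)
    (hB2 : ((2 : ℝ)⁻¹ • 1 - B).PosSemidef) {t : ℝ} (ht0 : 0 < t) (ht1 : t < 1)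
    (h : ((2 : ℝ)⁻¹ • 1 - arithMean t B A) * (A - B) = 0) : A = B := by
  rw [sub_arithMean] at h
  obtain ⟨hBD, hAD⟩ := mul_eq_zero_of_arithMean_mul_eq_zero hB2 hA2 ht0 ht1 h
  have hDD : (A - B)ᴴ * (A - B) = 0 := by
    rw [(hA.sub hB).eq]
    nth_rw 1 [← sub_sub_sub_cancel_left B A ((2 : ℝ)⁻¹ • 1)]
    rw [Matrix.sub_mul, hBD, hAD, sub_zero]
  exact sub_eq_zero.mp (conjTranspose_mul_self_eq_zero.mp hDD)

theorem Matrix.half_sub_mul_eq_zero_of_inv_sub_inv_mul_eq_zero {C X : Matrix n n 𝕜}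
    (hC : IsUnit C) (h1C : IsUnit (1 - C)) (h : (C⁻¹ - (1 - C)⁻¹) * X = 0) :
    ((2 : ℝ)⁻¹ • 1 - C) * X = 0 := by
  have := hC.invertible
  have := h1C.invertible
  have hcomm : C * (1 - C) = (1 - C) * C := by noncomm_ring
  have key : C * (1 - C) * (C⁻¹ - (1 - C)⁻¹) = 1 - C - C := by
    rw [Matrix.mul_sub, hcomm, Matrix.mul_assoc (1 - C), mul_inv_of_invertible, Matrix.mul_one,
      ← hcomm, mul_inv_cancel_right_of_invertible]
  have half : (2 : ℝ)⁻¹ • (1 : Matrix n n 𝕜) - C = (2 : ℝ)⁻¹ • (1 - C - C) := by module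
  rw [half, ← key, Matrix.smul_mul, Matrix.mul_assoc, h, Matrix.mul_zero, smul_zero]

theorem Matrix.arithMean_sub_harmMean_sub_one_sub {A B : Matrix n n 𝕜} (hA : A.PosDef)
    (hB : B.PosDef) (hA' : (1 - A).PosDef) (hB' : (1 - B).PosDef) {t : ℝ} (ht0 : 0 ≤ t)
    (ht1 : t ≤ 1) :
    (arithMean t A B - harmMean t A B) - (arithMean t (1 - A) (1 - B) - harmMean t (1 - A) (1 - B))
      = (t * (1 - t)) • ((A - B) * ((arithMean t B A)⁻¹ - (1 - arithMean t B A)⁻¹) * (A - B)) := by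
  have hC' : IsUnit (arithMean t (1 - B) (1 - A)) := (posDef_arithMean hB' hA' ht0 ht1).isUnit
  rw [arithMean_sub_harmMean hA.isUnit hB.isUnit (posDef_arithMean hB hA ht0 ht1).isUnit,
    arithMean_sub_harmMean hA'.isUnit hB'.isUnit hC', ← sub_arithMean, ← smul_sub]
  congr 1
  noncomm_ring

end Loewner

section Inverse

open scoped Matrix.Norms.L2Operator

variable {n : Type*} [Fintype n] [DecidableEq n]

theorem Matrix.PosDef.inv_sub_inv_posSemidef {A B : Matrix n n ℂ} (hA : A.PosDef)
    (hAB : (B - A).PosSemidef) : (A⁻¹ - B⁻¹).PosSemidef := by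
  have hB : B.PosDef := by simpa using hA.add_posSemidef hAB
  lift A to (Matrix n n ℂ)ˣ using hA.isUnit
  lift B to (Matrix n n ℂ)ˣ using hB.isUnit
  rw [← coe_units_inv, ← coe_units_inv, ← le_iff]
  exact CStarAlgebra.inv_le_inv hA.posSemidef.nonneg hAB

theorem Matrix.PosDef.inv_sub_inv_one_sub_posSemidef {C : Matrix n n ℂ} (hC : C.PosDef)
    (hC2 : ((2 : ℝ)⁻¹ • 1 - C).PosSemidef) : (C⁻¹ - (1 - C)⁻¹).PosSemidef := by
  refine hC.inv_sub_inv_posSemidef ?_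
  have h : 1 - C - C = (2 : ℝ) • ((2 : ℝ)⁻¹ • 1 - C) := by module
  exact h ▸ hC2.smul zero_le_two

end Inverse

/-- `A'∇_μB' - A'!_μB' ≤ A∇_μB - A!_μB` for `0 < A, B ≤ ½I`, with equality (when
`0 < μ < 1`) iff `A = B`. -/
theorem operator_kyFan_arith_harm (μ : ℝ) (hμ0 : 0 ≤ μ) (hμ1 : μ ≤ 1)
    (n : ℕ) (A B : Matrix (Fin n) (Fin n) ℂ) (hA : A.PosDef) (hB : B.PosDef)
    (hA2 : ((2:ℝ)⁻¹ • (1 : Matrix (Fin n) (Fin n) ℂ) - A).PosSemidef)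
    (hB2 : ((2:ℝ)⁻¹ • (1 : Matrix (Fin n) (Fin n) ℂ) - B).PosSemidef) :
    ((((1 - μ) • A + μ • B) - ((1 - μ) • A⁻¹ + μ • B⁻¹)⁻¹) -
      (((1 - μ) • (1 - A) + μ • (1 - B)) -
        ((1 - μ) • (1 - A)⁻¹ + μ • (1 - B)⁻¹)⁻¹)).PosSemidef ∧
    (0 < μ → μ < 1 →
      ((((1 - μ) • (1 - A) + μ • (1 - B)) - ((1 - μ) • (1 - A)⁻¹ + μ • (1 - B)⁻¹)⁻¹ =
        ((1 - μ) • A + μ • B) - ((1 - μ) • A⁻¹ + μ • B⁻¹)⁻¹) ↔ A = B)) := by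
  change ((arithMean μ A B - harmMean μ A B) -
      (arithMean μ (1 - A) (1 - B) - harmMean μ (1 - A) (1 - B))).PosSemidef ∧
    (0 < μ → μ < 1 → (arithMean μ (1 - A) (1 - B) - harmMean μ (1 - A) (1 - B) =
      arithMean μ A B - harmMean μ A B ↔ A = B))
  set C := arithMean μ B A
  have hC : C.PosDef := posDef_arithMean hB hA hμ0 hμ1
  have hC2 : ((2 : ℝ)⁻¹ • 1 - C).PosSemidef := by
    rw [sub_arithMean]
    exact posSemidef_arithMean hB2 hA2 hμ0 hμ1
  have hE := hC.inv_sub_inv_one_sub_posSemidef hC2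
  have hD : (A - B)ᴴ = A - B := (hA.1.sub hB.1).eq
  rw [eq_comm, ← sub_eq_zero, arithMean_sub_harmMean_sub_one_sub hA hB
    (posDef_one_sub_of_posSemidef_half_sub hA2) (posDef_one_sub_of_posSemidef_half_sub hB2)
    hμ0 hμ1]
  refine ⟨?_, fun h0 h1 => ⟨fun h => ?_, ?_⟩⟩
  · have hDED := (hE.conjTranspose_mul_mul_same (A - B)).smul (mul_nonneg hμ0 (sub_nonneg.mpr hμ1))
    rwa [hD] at hDED
  · have hμ : μ * (1 - μ) ≠ 0 := mul_ne_zero h0.ne' (sub_ne_zero.mpr h1.ne')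
    have hED : (C⁻¹ - (1 - C)⁻¹) * (A - B) = 0 := by
      refine hE.mul_eq_zero_of_conjTranspose_mul_mul_eq_zero ?_
      rw [hD]
      exact (smul_eq_zero.mp h).resolve_left hμ
    exact eq_of_half_sub_arithMean_mul_sub_eq_zero hA.1 hB.1 hA2 hB2 h0 h1
      (half_sub_mul_eq_zero_of_inv_sub_inv_mul_eq_zero hC.isUnit
        (posDef_one_sub_of_posSemidef_half_sub hC2).isUnit hED)
  · rintro rfl
    rw [sub_self, Matrix.mul_zero, smul_zero]
end

section
/- Let σ and τ be Kubo–Ando operator means. For all positive definite A, B: (AτB)^{-1}(AτB - AσB)(AτB)^{-1} ≤ (AσB)^{-1} - (AτB)^{-1} ≤ (AσB)^{-1}(AτB - AσB)(AσB)^{-1} in the Löwner order. -/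
/-!
With `D = X⁻¹ - Y⁻¹` one has the exact identities
`X⁻¹ - Y⁻¹ - Y⁻¹(Y - X)Y⁻¹ = D X D` and `X⁻¹(Y - X)X⁻¹ - (X⁻¹ - Y⁻¹) = D Y D`,
the matrix versions of `(1/a - 1/b)² a ≥ 0` and `(1/a - 1/b)² b ≥ 0`. Both right-hand sides are
positive semidefinite as soon as `X` and `Y` are positive definite, so the theorem reduces to the
positive definiteness of the two means. That in turn needs `f > 0` on `(0, ∞)`: for `t ≥ 1` this is
monotonicity, and for `t < 1` one compares a rank-one projection `P` with `diag(t, 2) ≥ P` to get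
`f t ≥ f 0 (1 - t/2) + t/2 > 0`.
-/

open Matrix ComplexOrder

section TwoPointSpectrum

variable {A : Type*} [Ring A] [StarRing A] [Algebra ℝ A] [TopologicalSpace A]
  [ContinuousFunctionalCalculus ℝ A IsSelfAdjoint]

lemma cfc_eq_of_spectrum_subset_pair {a : A} {s t : ℝ} (hst : s ≠ t)
    (h : spectrum ℝ a ⊆ {s, t}) (f : ℝ → ℝ) (ha : IsSelfAdjoint a := by cfc_tac) :
    cfc f a =
      algebraMap ℝ A (f s - (f t - f s) / (t - s) * s) + ((f t - f s) / (t - s)) • a := by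
  have hts : t - s ≠ 0 := sub_ne_zero.mpr hst.symm
  rw [← cfc_const_mul_id _ a, ← cfc_const_add _ _ a]
  refine cfc_congr fun y hy => ?_
  rcases h hy with rfl | rfl <;> field_simp <;> ring

end TwoPointSpectrum

namespace Matrix

variable {n 𝕜 : Type*} [Fintype n] [RCLike 𝕜]

open scoped MatrixOrder

lemma PosSemidef.mul_mul_same_of_isHermitian {M D : Matrix n n 𝕜} (hM : M.PosSemidef)
    (hD : D.IsHermitian) : (D * M * D).PosSemidef := by
  simpa only [hD.eq] using hM.conjTranspose_mul_mul_same D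

variable [DecidableEq n]

lemma spectrum_real_diagonal_ofReal (d : n → ℝ) :
    spectrum ℝ (diagonal fun i => (d i : 𝕜)) = Set.range d := by
  ext y
  rw [← spectrum.preimage_algebraMap 𝕜, Set.mem_preimage, spectrum_diagonal]
  simp [eq_comm]

lemma PosDef.posDef_cfc {M : Matrix n n 𝕜} (hM : M.PosDef) {f : ℝ → ℝ}
    (hf : ∀ t, 0 < t → 0 < f t) : (cfc f M).PosDef := by
  have hspec := (StarOrderedRing.isStrictlyPositive_iff_spectrum_pos (R := ℝ) M
    hM.1.isSelfAdjoint).mp hM.isStrictlyPositive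
  rw [← isStrictlyPositive_iff_posDef, cfc_isStrictlyPositive_iff f M
    (M.finite_real_spectrum.continuousOn _) hM.1.isSelfAdjoint]
  exact fun x hx => hf x (hspec x hx)

lemma inv_sub_inv_mul_mul_inv_sub_inv {X Y : Matrix n n 𝕜} (hX : IsUnit X) (hY : IsUnit Y) :
    (X⁻¹ - Y⁻¹) * X * (X⁻¹ - Y⁻¹) = X⁻¹ - Y⁻¹ - Y⁻¹ * (Y - X) * Y⁻¹ := by
  have hX1 : X⁻¹ * X = 1 := nonsing_inv_mul X ((isUnit_iff_isUnit_det X).mp hX)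
  have hX2 : X * X⁻¹ = 1 := mul_nonsing_inv X ((isUnit_iff_isUnit_det X).mp hX)
  have hY1 : Y⁻¹ * Y = 1 := nonsing_inv_mul Y ((isUnit_iff_isUnit_det Y).mp hY)
  simp only [sub_mul, mul_sub, Matrix.mul_assoc, hX2, hY1]
  simp only [← Matrix.mul_assoc, hX1, Matrix.one_mul, Matrix.mul_one]

lemma inv_sub_inv_mul_mul_inv_sub_inv' {X Y : Matrix n n 𝕜} (hX : IsUnit X) (hY : IsUnit Y) :
    (X⁻¹ - Y⁻¹) * Y * (X⁻¹ - Y⁻¹) = X⁻¹ * (Y - X) * X⁻¹ - (X⁻¹ - Y⁻¹) := by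
  have hX1 : X⁻¹ * X = 1 := nonsing_inv_mul X ((isUnit_iff_isUnit_det X).mp hX)
  have hY1 : Y⁻¹ * Y = 1 := nonsing_inv_mul Y ((isUnit_iff_isUnit_det Y).mp hY)
  have hY2 : Y * Y⁻¹ = 1 := mul_nonsing_inv Y ((isUnit_iff_isUnit_det Y).mp hY)
  simp only [sub_mul, mul_sub, Matrix.mul_assoc, hX1, hY2]
  simp only [← Matrix.mul_assoc, hY1, Matrix.one_mul, Matrix.mul_one]

lemma PosDef.inv_mul_sub_mul_inv_le_inv_sub_inv {X Y : Matrix n n 𝕜} (hX : X.PosDef)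
    (hY : Y.PosDef) : Y⁻¹ * (Y - X) * Y⁻¹ ≤ X⁻¹ - Y⁻¹ := by
  rw [le_iff, ← inv_sub_inv_mul_mul_inv_sub_inv hX.isUnit hY.isUnit]
  exact hX.posSemidef.mul_mul_same_of_isHermitian (hX.1.inv.sub hY.1.inv)

lemma PosDef.inv_sub_inv_le_inv_mul_sub_mul_inv {X Y : Matrix n n 𝕜} (hX : X.PosDef)
    (hY : Y.PosDef) : X⁻¹ - Y⁻¹ ≤ X⁻¹ * (Y - X) * X⁻¹ := by
  rw [le_iff, ← inv_sub_inv_mul_mul_inv_sub_inv' hX.isUnit hY.isUnit]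
  exact hY.posSemidef.mul_mul_same_of_isHermitian (hX.1.inv.sub hY.1.inv)

end Matrix

/-- `P` projects onto the unit vector `x = (√(t/2), √(1 - t/2))`, and
`diag(t, 2) - P = w wᴴ + diag(0, t)` with `w = (√(t/2), -√(1 - t/2))`. -/
lemma exists_isIdempotentElem_le_diagonal {t : ℝ} (ht : 0 ≤ t) (ht2 : t ≤ 2) :
    ∃ P : Matrix (Fin 2) (Fin 2) ℂ, P.PosSemidef ∧ IsIdempotentElem P ∧
      P 0 0 = ((t / 2 : ℝ) : ℂ) ∧ (diagonal (fun i => (![t, 2] i : ℂ)) - P).PosSemidef := by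
  set ε := √(t / 2)
  set c := √(1 - t / 2)
  have hε : (ε : ℂ) * ε = ((t / 2 : ℝ) : ℂ) := by
    rw [← Complex.ofReal_mul, Real.mul_self_sqrt (by linarith)]
  have hc : (c : ℂ) * c = ((1 - t / 2 : ℝ) : ℂ) := by
    rw [← Complex.ofReal_mul, Real.mul_self_sqrt (by linarith)]
  let x : Fin 2 → ℂ := ![ε, c]
  let w : Fin 2 → ℂ := ![ε, -c]
  refine ⟨vecMulVec x (star x), posSemidef_vecMulVec_self_star x, ?_, by simp [x, hε], ?_⟩
  · have hx : star x ⬝ᵥ x = 1 := by simp [x, dotProduct, Fin.sum_univ_two, hε, hc]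
    rw [IsIdempotentElem, vecMulVec_mul_vecMulVec, hx, one_smul]
  · have hsplit : diagonal (fun i => (![t, 2] i : ℂ)) - vecMulVec x (star x) =
        vecMulVec w (star w) + diagonal ![0, (t : ℂ)] := by
      ext i j
      simp only [Matrix.sub_apply, Matrix.add_apply, vecMulVec_apply]
      fin_cases i <;> fin_cases j <;> simp [x, w, hε, hc] <;> ring
    rw [hsplit]
    refine (posSemidef_vecMulVec_self_star w).add (posSemidef_diagonal_iff.mpr fun i => ?_)
    fin_cases i <;> simp [Complex.zero_le_real.mpr ht]

namespace OperatorMonotone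

variable {f : ℝ → ℝ}

lemma monotoneOn (hf : OperatorMonotone f) : MonotoneOn f (Set.Ici 0) := by
  intro a ha b hb hab
  have hscalar : ∀ c : ℝ, 0 ≤ c → (algebraMap ℝ (Matrix (Fin 1) (Fin 1) ℂ) c).PosSemidef :=
    fun c hc => by
      rw [Algebra.algebraMap_eq_smul_one]
      exact PosSemidef.one.smul hc
  have h := hf 1 _ _ (hscalar a ha) (hscalar b hb)
    (by rw [← map_sub]; exact hscalar _ (sub_nonneg.2 hab))
  rw [cfc_algebraMap, cfc_algebraMap, ← map_sub] at h
  simpa [algebraMap_matrix_apply, sub_nonneg] using h.diag_nonneg (i := 0)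

lemma le_apply_of_lt_two (hf : OperatorMonotone f) {t : ℝ} (ht : 0 ≤ t) (ht2 : t < 2) :
    f 0 + (f 1 - f 0) * (t / 2) ≤ f t := by
  obtain ⟨P, hP, hPidem, hP00, hPB⟩ := exists_isIdempotentElem_le_diagonal ht ht2.le
  set B : Matrix (Fin 2) (Fin 2) ℂ := diagonal (fun i => (![t, 2] i : ℂ)) with hBdef
  have hB : B.PosSemidef := by simpa using hPB.add hP
  have hspecB : spectrum ℝ B ⊆ {t, 2} := by
    refine (spectrum_real_diagonal_ofReal (𝕜 := ℂ) ![t, 2]).subset.trans ?_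
    exact Set.range_subset_iff.mpr fun i => by fin_cases i <;> simp
  have h := hf 2 P B hP hB hPB
  rw [cfc_eq_of_spectrum_subset_pair (by linarith) hspecB f hB.isHermitian.isSelfAdjoint,
    cfc_eq_of_spectrum_subset_pair zero_ne_one (hPidem.spectrum_subset ℝ) f
      hP.isHermitian.isSelfAdjoint] at h
  have h00 := h.diag_nonneg (i := 0)
  simp only [Matrix.sub_apply, Matrix.add_apply, Matrix.smul_apply, algebraMap_matrix_apply,
    hP00, hBdef, diagonal_apply_eq] at h00
  rw [← Complex.real_le_real]
  simpa using h00

lemma pos (hf : OperatorMonotone f) (hfnn : ∀ t ≥ (0:ℝ), 0 ≤ f t) (hf1 : f 1 = 1)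
    {t : ℝ} (ht : 0 < t) : 0 < f t := by
  rcases le_or_gt 1 t with h1 | h1
  · have := hf.monotoneOn (Set.mem_Ici.2 zero_le_one) (Set.mem_Ici.2 ht.le) h1
    linarith
  · have := hf.le_apply_of_lt_two ht.le (by linarith)
    nlinarith [hfnn 0 le_rfl]

end OperatorMonotone

lemma posDef_opMean {k : ℕ} {f : ℝ → ℝ} (hf : ∀ t, 0 < t → 0 < f t)
    {A B : Matrix (Fin k) (Fin k) ℂ} (hA : A.PosDef) (hB : B.PosDef) :
    (opMean f A B).PosDef := by
  have hS : (msqrt A).PosDef := hA.posDef_cfc fun t ht => Real.sqrt_pos.mpr ht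
  have hSinv := hS.inv
  have hC : ((msqrt A)⁻¹ * B * (msqrt A)⁻¹).PosDef := by
    simpa only [hSinv.1.star_eq] using
      (IsUnit.posDef_star_left_conjugate_iff hSinv.isUnit).mpr hB
  simpa only [opMean, hS.1.star_eq] using
    (IsUnit.posDef_star_left_conjugate_iff hS.isUnit).mpr (hC.posDef_cfc hf)

/-- For Kubo–Ando means `σ`, `τ` with representing functions `f`, `g`:
`(AτB)⁻¹(AτB - AσB)(AτB)⁻¹ ≤ (AσB)⁻¹ - (AτB)⁻¹ ≤ (AσB)⁻¹(AτB - AσB)(AσB)⁻¹`. -/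
theorem inverse_mean_difference_bounds (f g : ℝ → ℝ)
    (hf : OperatorMonotone f) (hfnn : ∀ t ≥ (0:ℝ), 0 ≤ f t) (hf1 : f 1 = 1)
    (hg : OperatorMonotone g) (hgnn : ∀ t ≥ (0:ℝ), 0 ≤ g t) (hg1 : g 1 = 1)
    (n : ℕ) (A B : Matrix (Fin n) (Fin n) ℂ) (hA : A.PosDef) (hB : B.PosDef) :
    (((opMean f A B)⁻¹ - (opMean g A B)⁻¹) -
      (opMean g A B)⁻¹ * (opMean g A B - opMean f A B) * (opMean g A B)⁻¹).PosSemidef ∧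
    ((opMean f A B)⁻¹ * (opMean g A B - opMean f A B) * (opMean f A B)⁻¹ -
      ((opMean f A B)⁻¹ - (opMean g A B)⁻¹)).PosSemidef := by
  have hX := posDef_opMean (fun _ => hf.pos hfnn hf1) hA hB
  have hY := posDef_opMean (fun _ => hg.pos hgnn hg1) hA hB
  exact ⟨le_iff.mp (hX.inv_mul_sub_mul_inv_le_inv_sub_inv hY),
    le_iff.mp (hX.inv_sub_inv_le_inv_mul_sub_mul_inv hY)⟩
end
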